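/- For any complex z with Re z > 1/2 (so z ∉ [1/2 - i∞-cut region]) and a > 0 such that 1 + a²(z-1/2)² avoids the nonpositive reals, the modulus |(1 + sqrt(1 + a²(z-1/2)²))/(a(z-1/2))| > 1 when Re z > 1/2; i.e. the map f_{1a}(z) = (1 + sqrt(1+a²(z-1/2)²))/(a(z-1/2)) sends points off the critical line to points outside the closed unit disk. -/

import Mathlib

/-!
Write `w = a (z - 1/2)` and `s = √(1 + w²)` (principal branch). Off the cut, `1 + w²` lies in the
slit plane, so `Re s > 0`; then `|w|² = |s² - 1| ≤ |s|² + 1 < |s|² + 2 Re s + 1 = |1 + s|²`.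
-/

open Complex

lemma Complex.mem_slitPlane_of_forall_ne_ofReal {x : ℂ} (hx : ∀ r : ℝ, r ≤ 0 → x ≠ r) :
    x ∈ slitPlane := by
  rw [mem_slitPlane_iff_not_le_zero]
  intro hle
  obtain ⟨hre, him⟩ := le_def.mp hle
  exact hx x.re hre (ext rfl him)

lemma Complex.re_cpow_inv_two_pos {x : ℂ} (hx : x ∈ slitPlane) : 0 < (x ^ (2⁻¹ : ℂ)).re := by
  rw [cpow_inv_two_re, Real.sqrt_pos]
  rcases mem_slitPlane_iff.mp hx with hre | him
  · linarith [norm_nonneg x]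
  · linarith [neg_abs_le x.re, abs_re_lt_norm.mpr him]

lemma Complex.norm_lt_norm_one_add_of_sq_eq {s w : ℂ} (hsw : s ^ 2 = 1 + w ^ 2) (hs : 0 < s.re) :
    ‖w‖ < ‖1 + s‖ := by
  have hs1 : ‖1 + s‖ ^ 2 = 1 + 2 * s.re + ‖s‖ ^ 2 := by
    rw [← normSq_eq_norm_sq, ← normSq_eq_norm_sq, normSq_apply, normSq_apply]
    simp only [add_re, add_im, one_re, one_im]
    ring
  refine lt_of_pow_lt_pow_left₀ 2 (norm_nonneg _) ?_
  calc ‖w‖ ^ 2 = ‖s ^ 2 - 1‖ := by rw [hsw, add_sub_cancel_left, norm_pow]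
    _ ≤ ‖s‖ ^ 2 + 1 := (norm_sub_le _ _).trans_eq (by rw [norm_pow, norm_one])
    _ < ‖1 + s‖ ^ 2 := by rw [hs1]; linarith

theorem stmt_16 (z : ℂ) (hz : 1/2 < z.re) (a : ℝ) (ha : 0 < a)
    (hcut : ∀ s : ℝ, s ≤ 0 → 1 + (a : ℂ)^2 * (z - 1/2)^2 ≠ (s : ℂ)) :
    1 < ‖
        ((1 + (1 + (a : ℂ)^2 * (z - 1/2)^2) ^ ((1:ℂ)/2)) / ((a : ℂ) * (z - 1/2)))‖ := by
  set w : ℂ := (a : ℂ) * (z - 1/2)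
  have hw : w ≠ 0 := mul_ne_zero (ofReal_ne_zero.mpr ha.ne') fun h ↦ by
    simpa [sub_eq_zero.mp h] using hz.ne
  have hu : 1 + (a : ℂ)^2 * (z - 1/2)^2 = 1 + w ^ 2 := by ring
  rw [hu, one_div, norm_div, one_lt_div (norm_pos_iff.mpr hw)]
  exact norm_lt_norm_one_add_of_sq_eq (cpow_ofNat_inv_pow _ 2)
    (re_cpow_inv_two_pos (mem_slitPlane_of_forall_ne_ofReal (hu ▸ hcut)))
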